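/- Let m₀ ∈ L^∞(Ω) with m₀ ≥ 0 a.e. and ∫_Ω m₀ dx > 0. Then for every m in the weak* closure of the class of rearrangements of m₀ (equivalently, every m ∈ L^∞(Ω) with m ≺ m₀), one has |{x ∈ Ω : m₀(x) > 0}| ≤ |{x ∈ Ω : m(x) > 0}|. -/

import Mathlib

open MeasureTheory Set Filter Topology
open scoped ENNReal

noncomputable section

/-- Distribution function `d_f(t) = |{x ∈ Ω : f x > t}|`. -/
def distrib {N : ℕ} (Ω : Set (Fin N → ℝ)) (f : (Fin N → ℝ) → ℝ) (t : ℝ) : ℝ≥0∞ :=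
  volume {x ∈ Ω | t < f x}

/-- Equimeasurability of two functions on `Ω`. -/
def EquiMeas {N : ℕ} (Ω : Set (Fin N → ℝ)) (f g : (Fin N → ℝ) → ℝ) : Prop :=
  ∀ t : ℝ, distrib Ω f t = distrib Ω g t

/-- Decreasing rearrangement `f*(s) = sup {t : d_f(t) > s}`. -/
def decRearr {N : ℕ} (Ω : Set (Fin N → ℝ)) (f : (Fin N → ℝ) → ℝ) (s : ℝ) : ℝ :=
  sSup {t : ℝ | ENNReal.ofReal s < distrib Ω f t}

/-- Hardy–Littlewood–Pólya order `g ≺ f`. -/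
def Prec {N : ℕ} (Ω : Set (Fin N → ℝ)) (g f : (Fin N → ℝ) → ℝ) : Prop :=
  (∀ t ∈ Icc (0 : ℝ) (volume Ω).toReal,
      ∫ s in Ioo (0 : ℝ) t, decRearr Ω g s ≤ ∫ s in Ioo (0 : ℝ) t, decRearr Ω f s) ∧
  ∫ s in Ioo (0 : ℝ) (volume Ω).toReal, decRearr Ω g s
    = ∫ s in Ioo (0 : ℝ) (volume Ω).toReal, decRearr Ω f s

/-!
Write `α = |{m₀ > 0}|`, `β = |{m > 0}|` and `T = |Ω|`. The rearrangement `m*` is nonpositive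
on `(β, T)`, so the two conditions of `m ≺ m₀` give `∫_β^T m₀* ≤ ∫_β^T m* ≤ 0`. On the other
hand `m₀*` is nonnegative, and positive on `[0, α)` by right continuity of the distribution
function of `m₀` at `0`; hence `∫_β^T m₀* > 0` as soon as `β < α`.
-/

variable {N : ℕ} {Ω : Set (Fin N → ℝ)} {f g : (Fin N → ℝ) → ℝ} {s t C : ℝ}

lemma distrib_antitone : Antitone (distrib Ω f) :=
  fun _ _ h => measure_mono fun _ hx => ⟨hx.1, h.trans_lt hx.2⟩

lemma distrib_le_volume : distrib Ω f t ≤ volume Ω :=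
  measure_mono (sep_subset _ _)

lemma distrib_ne_top (hΩ : volume Ω ≠ ∞) : distrib Ω f t ≠ ∞ :=
  ne_top_of_le_ne_top hΩ distrib_le_volume

lemma measure_diff_setOf_eq_zero {p : (Fin N → ℝ) → Prop}
    (hp : ∀ᵐ x ∂(volume.restrict Ω), p x) : volume (Ω \ {x | p x}) = 0 :=
  measure_mono_null (by rw [sdiff_eq, inter_comm]; rfl) <|
    le_antisymm ((Measure.le_restrict_apply _ _).trans (ae_iff.1 hp).le) bot_le

lemma distrib_eq_zero_of_ae_le (hf : ∀ᵐ x ∂(volume.restrict Ω), f x ≤ t) :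
    distrib Ω f t = 0 := by
  refine measure_mono_null ?_ (measure_diff_setOf_eq_zero hf)
  exact fun _ hx => ⟨hx.1, not_le.2 hx.2⟩

lemma distrib_eq_volume_of_ae_lt (hf : ∀ᵐ x ∂(volume.restrict Ω), t < f x) :
    distrib Ω f t = volume Ω := by
  refine le_antisymm distrib_le_volume ?_
  calc volume Ω ≤ volume (Ω ∩ {x | t < f x}) + volume (Ω \ {x | t < f x}) :=
        measure_le_inter_add_sdiff volume Ω _
    _ = distrib Ω f t := by rw [measure_diff_setOf_eq_zero hf, add_zero]; rfl

lemma exists_lt_distrib_of_lt {a : ℝ≥0∞} (h : a < distrib Ω f t) :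
    ∃ t' > t, a < distrib Ω f t' := by
  have hunion : {x ∈ Ω | t < f x} = ⋃ n : ℕ, {x ∈ Ω | t + 1 / (n + 1) < f x} := by
    ext x
    simp only [mem_iUnion]
    constructor
    · rintro ⟨hx, hlt⟩
      obtain ⟨n, hn⟩ := exists_nat_one_div_lt (sub_pos.2 hlt)
      exact ⟨n, hx, by linarith⟩
    · rintro ⟨n, hx, hlt⟩
      exact ⟨hx, lt_of_le_of_lt (le_add_of_nonneg_right (by positivity)) hlt⟩
  have hmono : Monotone fun n : ℕ => {x ∈ Ω | t + 1 / (n + 1) < f x} :=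
    fun i j hij x hx => ⟨hx.1, lt_of_le_of_lt (by gcongr) hx.2⟩
  rw [distrib, hunion, hmono.measure_iUnion, lt_iSup_iff] at h
  obtain ⟨n, hn⟩ := h
  exact ⟨t + 1 / (n + 1), lt_add_of_pos_right _ (by positivity), hn⟩

lemma lt_of_ofReal_lt_distrib (hf : ∀ᵐ x ∂(volume.restrict Ω), f x ≤ C)
    (ht : ENNReal.ofReal s < distrib Ω f t) : t < C :=
  lt_of_not_ge fun hCt =>
    not_lt_zero ((ht.trans_le (distrib_antitone hCt)).trans_eq (distrib_eq_zero_of_ae_le hf))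

lemma le_decRearr (hf : ∀ᵐ x ∂(volume.restrict Ω), f x ≤ C)
    (ht : ENNReal.ofReal s < distrib Ω f t) : t ≤ decRearr Ω f s :=
  le_csSup ⟨C, fun _ ht' => (lt_of_ofReal_lt_distrib hf ht').le⟩ ht

lemma decRearr_le_of_distrib_le (h0 : 0 ≤ t) (ht : distrib Ω f t ≤ ENNReal.ofReal s) :
    decRearr Ω f s ≤ t :=
  Real.sSup_le (fun _ ht' => le_of_not_gt fun hlt =>
    (ht'.trans_le ((distrib_antitone hlt.le).trans ht)).false) h0

lemma ofReal_lt_volume_of_mem_Ico (hs : s ∈ Ico 0 (volume Ω).toReal) :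
    ENNReal.ofReal s < volume Ω :=
  ((ENNReal.ofReal_lt_ofReal_iff (hs.1.trans_lt hs.2)).2 hs.2).trans_le ENNReal.ofReal_toReal_le

section Bounded

variable (hf : ∀ᵐ x ∂(volume.restrict Ω), |f x| ≤ C)
include hf

lemma ofReal_lt_distrib_of_lt_neg (hs : s ∈ Ico 0 (volume Ω).toReal) (ht : t < -C) :
    ENNReal.ofReal s < distrib Ω f t := by
  rw [distrib_eq_volume_of_ae_lt (hf.mono fun _ hx => ht.trans_le (neg_le_of_abs_le hx))]
  exact ofReal_lt_volume_of_mem_Ico hs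

lemma abs_decRearr_le (hs : s ∈ Ico 0 (volume Ω).toReal) : |decRearr Ω f s| ≤ C := by
  have hf_le : ∀ᵐ x ∂(volume.restrict Ω), f x ≤ C := hf.mono fun _ hx => (le_abs_self _).trans hx
  refine abs_le.2 ⟨le_of_forall_lt_imp_le_of_dense fun t ht =>
    le_decRearr hf_le (ofReal_lt_distrib_of_lt_neg hf hs ht), ?_⟩
  exact csSup_le ⟨_, ofReal_lt_distrib_of_lt_neg hf hs (sub_one_lt _)⟩
    fun _ ht => (lt_of_ofReal_lt_distrib hf_le ht).le

lemma decRearr_antitoneOn : AntitoneOn (decRearr Ω f) (Ico 0 (volume Ω).toReal) :=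
  fun _ _ _ hs hst => csSup_le ⟨_, ofReal_lt_distrib_of_lt_neg hf hs (sub_one_lt _)⟩ fun _ hu =>
    le_decRearr (hf.mono fun _ hx => (le_abs_self _).trans hx)
      ((ENNReal.ofReal_le_ofReal hst).trans_lt hu)

lemma integrableOn_decRearr : IntegrableOn (decRearr Ω f) (Ioo 0 (volume Ω).toReal) :=
  IntegrableOn.of_bound measure_Ioo_lt_top
    ((aemeasurable_restrict_of_antitoneOn measurableSet_Ioo
      ((decRearr_antitoneOn hf).mono Ioo_subset_Ico_self)).aestronglyMeasurable) C
    ((ae_restrict_mem measurableSet_Ioo).mono fun _ hs =>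
      abs_decRearr_le hf (Ioo_subset_Ico_self hs))

lemma intervalIntegrable_decRearr {a b : ℝ} (ha : a ∈ Icc 0 (volume Ω).toReal)
    (hb : b ∈ Icc 0 (volume Ω).toReal) : IntervalIntegrable (decRearr Ω f) volume a b :=
  ((intervalIntegrable_iff_integrableOn_Ioo_of_le ENNReal.toReal_nonneg).2
    (integrableOn_decRearr hf)).mono_set
      (uIcc_subset_uIcc (Icc_subset_uIcc ha) (Icc_subset_uIcc hb))

end Bounded

lemma decRearr_nonneg (hf₀ : ∀ᵐ x ∂(volume.restrict Ω), 0 ≤ f x)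
    (hf : ∀ᵐ x ∂(volume.restrict Ω), f x ≤ C) : 0 ≤ decRearr Ω f s := by
  by_cases hs : ENNReal.ofReal s < volume Ω
  · refine le_of_forall_lt_imp_le_of_dense fun t ht => le_decRearr hf ?_
    rwa [distrib_eq_volume_of_ae_lt (hf₀.mono fun _ hx => ht.trans_le hx)]
  · -- past `|Ω|` the defining set is empty, and `sSup ∅ = 0`
    have hempty : {t | ENNReal.ofReal s < distrib Ω f t} = ∅ :=
      eq_empty_of_forall_notMem fun _ ht => hs (ht.trans_le distrib_le_volume)
    rw [decRearr, hempty, Real.sSup_empty]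

lemma Prec.intervalIntegral_decRearr_nonpos {C' b : ℝ} (hprec : Prec Ω g f)
    (hg : ∀ᵐ x ∂(volume.restrict Ω), |g x| ≤ C) (hf : ∀ᵐ x ∂(volume.restrict Ω), |f x| ≤ C')
    (hb : b ∈ Icc 0 (volume Ω).toReal)
    (hg_nonpos : ∀ s ∈ Ioo b (volume Ω).toReal, decRearr Ω g s ≤ 0) :
    ∫ s in b..(volume Ω).toReal, decRearr Ω f s ≤ 0 := by
  set T := (volume Ω).toReal
  have h0 : (0 : ℝ) ∈ Icc 0 T := ⟨le_rfl, ENNReal.toReal_nonneg⟩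
  have hT : T ∈ Icc 0 T := ⟨ENNReal.toReal_nonneg, le_rfl⟩
  have hIoo : ∀ (h : (Fin N → ℝ) → ℝ) {c : ℝ}, 0 ≤ c →
      ∫ s in Ioo 0 c, decRearr Ω h s = ∫ s in 0..c, decRearr Ω h s := fun h c hc => by
    rw [intervalIntegral.integral_of_le hc, integral_Ioc_eq_integral_Ioo]
  have hsplit : ∀ (h : (Fin N → ℝ) → ℝ) {C''}, (∀ᵐ x ∂(volume.restrict Ω), |h x| ≤ C'') →
      ∫ s in 0..T, decRearr Ω h s = (∫ s in 0..b, decRearr Ω h s) + ∫ s in b..T, decRearr Ω h s :=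
    fun h _ hh => (intervalIntegral.integral_add_adjacent_intervals
      (intervalIntegrable_decRearr hh h0 hb) (intervalIntegrable_decRearr hh hb hT)).symm
  have hg_tail : ∫ s in b..T, decRearr Ω g s ≤ 0 := by
    simpa using intervalIntegral.integral_mono_on_of_le_Ioo hb.2
      (intervalIntegrable_decRearr hg hb hT) intervalIntegrable_const hg_nonpos
  have hhead := hprec.1 b hb
  have htotal := hprec.2
  rw [hIoo g hb.1, hIoo f hb.1] at hhead
  rw [hIoo g hT.1, hIoo f hT.1, hsplit g hg, hsplit f hf] at htotal
  linarith

lemma intervalIntegral_decRearr_pos {b : ℝ} (hΩ : volume Ω ≠ ∞)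
    (hf₀ : ∀ᵐ x ∂(volume.restrict Ω), 0 ≤ f x) (hf : ∀ᵐ x ∂(volume.restrict Ω), |f x| ≤ C)
    (hb : 0 ≤ b) (hb_lt : b < (distrib Ω f 0).toReal) :
    0 < ∫ s in b..(volume Ω).toReal, decRearr Ω f s := by
  set T := (volume Ω).toReal
  set α := (distrib Ω f 0).toReal
  have hf_le : ∀ᵐ x ∂(volume.restrict Ω), f x ≤ C := hf.mono fun _ hx => (le_abs_self _).trans hx
  have hαT : α ≤ T := ENNReal.toReal_mono hΩ distrib_le_volume
  have hpos : ∀ s ∈ Ioo b α, 0 < decRearr Ω f s := fun s hs => by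
    have hs' : ENNReal.ofReal s < distrib Ω f 0 :=
      (ENNReal.ofReal_lt_iff_lt_toReal (hb.trans hs.1.le) (distrib_ne_top hΩ)).2 hs.2
    obtain ⟨t, ht, hst⟩ := exists_lt_distrib_of_lt hs'
    exact ht.trans_le (le_decRearr hf_le hst)
  calc 0 < ∫ s in b..α, decRearr Ω f s :=
        intervalIntegral.intervalIntegral_pos_of_pos_on
          (intervalIntegrable_decRearr hf ⟨hb, hb_lt.le.trans hαT⟩ ⟨hb.trans hb_lt.le, hαT⟩)
          hpos hb_lt
    _ ≤ ∫ s in b..T, decRearr Ω f s :=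
        intervalIntegral.integral_mono_interval le_rfl hb_lt.le hαT
          (Eventually.of_forall fun _ => decRearr_nonneg hf₀ hf_le)
          (intervalIntegrable_decRearr hf ⟨hb, hb_lt.le.trans hαT⟩ ⟨ENNReal.toReal_nonneg, le_rfl⟩)

end

theorem measure_pos_set_le_of_prec_nonneg_general
    (N : ℕ) (Ω : Set (Fin N → ℝ)) (hΩb : Bornology.IsBounded Ω)
    (m₀ : (Fin N → ℝ) → ℝ)
    (hm₀b : ∃ C : ℝ, ∀ᵐ x ∂(volume.restrict Ω), |m₀ x| ≤ C)
    (hm₀nonneg : ∀ᵐ x ∂(volume.restrict Ω), 0 ≤ m₀ x)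
    (m : (Fin N → ℝ) → ℝ)
    (hmb : ∃ C : ℝ, ∀ᵐ x ∂(volume.restrict Ω), |m x| ≤ C)
    (hprec : Prec Ω m m₀) :
    volume {x ∈ Ω | 0 < m₀ x} ≤ volume {x ∈ Ω | 0 < m x} := by
  obtain ⟨C₀, hm₀C⟩ := hm₀b
  obtain ⟨C, hmC⟩ := hmb
  have hΩ : volume Ω ≠ ∞ := hΩb.measure_lt_top.ne
  by_contra! hlt
  set β := (distrib Ω m 0).toReal
  have hβα : β < (distrib Ω m₀ 0).toReal :=
    (ENNReal.toReal_lt_toReal (distrib_ne_top hΩ) (distrib_ne_top hΩ)).2 hlt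
  have hβT : β ≤ (volume Ω).toReal := ENNReal.toReal_mono hΩ distrib_le_volume
  have hm_nonpos : ∀ s ∈ Ioo β (volume Ω).toReal, decRearr Ω m s ≤ 0 := fun s hs =>
    decRearr_le_of_distrib_le le_rfl <| by
      rw [← ENNReal.ofReal_toReal (distrib_ne_top hΩ)]
      exact ENNReal.ofReal_le_ofReal hs.1.le
  exact (intervalIntegral_decRearr_pos hΩ hm₀nonneg hm₀C ENNReal.toReal_nonneg hβα).not_ge
    (hprec.intervalIntegral_decRearr_nonpos hmC hm₀C ⟨ENNReal.toReal_nonneg, hβT⟩ hm_nonpos)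

theorem measure_pos_set_le_of_prec_nonneg
    (N : ℕ) (Ω : Set (Fin N → ℝ)) (hΩo : IsOpen Ω) (hΩb : Bornology.IsBounded Ω)
    (m₀ : (Fin N → ℝ) → ℝ) (hm₀ : Measurable m₀)
    (hm₀b : ∃ C : ℝ, ∀ᵐ x ∂(volume.restrict Ω), |m₀ x| ≤ C)
    (hm₀nonneg : ∀ᵐ x ∂(volume.restrict Ω), 0 ≤ m₀ x)
    (hm₀int : 0 < ∫ x in Ω, m₀ x)
    (m : (Fin N → ℝ) → ℝ) (hm : Measurable m)
    (hmb : ∃ C : ℝ, ∀ᵐ x ∂(volume.restrict Ω), |m x| ≤ C)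
    (hprec : Prec Ω m m₀) :
    volume {x ∈ Ω | 0 < m₀ x} ≤ volume {x ∈ Ω | 0 < m x} :=
  measure_pos_set_le_of_prec_nonneg_general N Ω hΩb m₀ hm₀b hm₀nonneg m hmb hprec
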